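/- arXiv:2508.01336 — 4 statements merged into one kernel-verified Lean document; each statement's English description precedes it below -/
import Mathlib

section
/- Let γ be real, ε₁ > 0 and α > 0. Then the Bernoulli function Q̂ attains its global minimum over (0, ∞) at a unique point d_cr > 0. Moreover, if α ≠ α_cr, then there exists a unique d_* > 0 with d_* ≠ 1 and Q̂(d_*) = Q̂(1); if α < α_cr then d_* ∈ (d_cr, ∞), while if α > α_cr then d_* ∈ (0, d_cr). -/
/-!
On `d > 0` one has `Q̂(d) = A / d² + B d² + 2αd + const` with `A = ((2 - γ)/2)² + ε₁ > 0` and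
`B = (γ/2)² ≥ 0`, so `Q̂'` is strictly increasing and `Q̂ → ∞` at both ends of `(0, ∞)`. Hence `Q̂`
strictly decreases up to its unique critical point `d_cr` and strictly increases after it, and
every value above the minimum is taken exactly once on each side of `d_cr`. As
`Q̂'(1) = 2(α - (A - B)) = 2(α - α_cr)`, the point `1` lies left of `d_cr` iff `α < α_cr`, and
`d_*` is the solution on the other side.
-/

/-- The Bernoulli function `Q̂(d) = (1/d²)·((2−γ)/2 + γ·d²/2)² + ε₁/d² + 2α(d−1)`. -/
noncomputable def Qhat (γ ε₁ α d : ℝ) : ℝ :=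
  (1 / d ^ 2) * ((2 - γ) / 2 + γ * d ^ 2 / 2) ^ 2 + ε₁ / d ^ 2 + 2 * α * (d - 1)

open Set Filter Topology

section Valley

variable {f : ℝ → ℝ} {a c : ℝ}

theorem ContinuousOn.exists_isMinOn_Ioi (hf : ContinuousOn f (Ioi a))
    (h₀ : Tendsto f (𝓝[>] a) atTop) (htop : Tendsto f atTop atTop) :
    ∃ c ∈ Ioi a, IsMinOn f (Ioi a) c := by
  obtain ⟨x₀, hx₀⟩ := exists_gt a
  obtain ⟨u, hu, hfu⟩ := (nhdsGT_basis a).eventually_iff.1 (h₀.eventually_ge_atTop (f x₀))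
  obtain ⟨R, hR⟩ := eventually_atTop.1 (htop.eventually_ge_atTop (f x₀))
  have hK : Icc (min u x₀) (max R x₀) ⊆ Ioi a := fun x hx => (lt_min hu hx₀).trans_le hx.1
  obtain ⟨c, hcK, hc⟩ := isCompact_Icc.exists_isMinOn ⟨x₀, min_le_right _ _, le_max_right _ _⟩
    (hf.mono hK)
  have hcx₀ : f c ≤ f x₀ := hc ⟨min_le_right _ _, le_max_right _ _⟩
  refine ⟨c, hK hcK, fun y (hy : a < y) => ?_⟩
  rcases lt_or_ge y (min u x₀) with hyu | hyu
  · exact hcx₀.trans (hfu ⟨hy, hyu.trans_le (min_le_left _ _)⟩)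
  rcases le_or_gt y (max R x₀) with hyR | hyR
  · exact hc ⟨hyu, hyR⟩
  · exact hcx₀.trans (hR y ((le_max_left _ _).trans hyR.le))

theorem strictAntiOn_Ioc_of_hasDerivAt {f' : ℝ → ℝ} (hf : ∀ x ∈ Ioi a, HasDerivAt f (f' x) x)
    (hf' : StrictMonoOn f' (Ioi a)) (hc : a < c) (hc' : f' c = 0) :
    StrictAntiOn f (Ioc a c) := by
  refine strictAntiOn_of_hasDerivWithinAt_neg (f' := f') (convex_Ioc a c)
    (fun x hx => (hf x hx.1).continuousAt.continuousWithinAt) (fun x hx => ?_) (fun x hx => ?_)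
  all_goals rw [interior_Ioc] at hx
  · exact (hf x hx.1).hasDerivWithinAt
  · exact hc' ▸ hf' hx.1 hc hx.2

theorem strictMonoOn_Ici_of_hasDerivAt {f' : ℝ → ℝ} (hf : ∀ x ∈ Ioi a, HasDerivAt f (f' x) x)
    (hf' : StrictMonoOn f' (Ioi a)) (hc : a < c) (hc' : f' c = 0) :
    StrictMonoOn f (Ici c) := by
  refine strictMonoOn_of_hasDerivWithinAt_pos (f' := f') (convex_Ici c)
    (fun x hx => (hf x (hc.trans_le hx)).continuousAt.continuousWithinAt) (fun x hx => ?_)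
    (fun x hx => ?_)
  all_goals rw [interior_Ici] at hx
  · exact (hf x (hc.trans hx)).hasDerivWithinAt
  · exact hc' ▸ hf' hc (hc.trans hx) hx

theorem exists_strictAntiOn_strictMonoOn_of_hasDerivAt {f' : ℝ → ℝ}
    (hf : ∀ x ∈ Ioi a, HasDerivAt f (f' x) x) (hf' : StrictMonoOn f' (Ioi a))
    (h₀ : Tendsto f (𝓝[>] a) atTop) (htop : Tendsto f atTop atTop) :
    ∃ c, a < c ∧ f' c = 0 ∧ StrictAntiOn f (Ioc a c) ∧ StrictMonoOn f (Ici c) := by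
  obtain ⟨c, hc, hmin⟩ := ContinuousOn.exists_isMinOn_Ioi
    (fun x hx => (hf x hx).continuousAt.continuousWithinAt) h₀ htop
  have hc' : f' c = 0 := (hmin.isLocalMin (Ioi_mem_nhds hc)).hasDerivAt_eq_zero (hf c hc)
  exact ⟨c, hc, hc', strictAntiOn_Ioc_of_hasDerivAt hf hf' hc hc',
    strictMonoOn_Ici_of_hasDerivAt hf hf' hc hc'⟩

variable (hc : a < c) (hanti : StrictAntiOn f (Ioc a c)) (hmono : StrictMonoOn f (Ici c))
include hc hanti hmono

theorem isMinOn_Ioi_of_strictAntiOn_of_strictMonoOn : IsMinOn f (Ioi a) c := by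
  intro x (hx : a < x)
  rcases le_total x c with hxc | hcx
  · exact hanti.antitoneOn ⟨hx, hxc⟩ ⟨hc, le_rfl⟩ hxc
  · exact hmono.monotoneOn self_mem_Ici hcx hcx

theorem eq_or_lt_lt_of_apply_eq {x y : ℝ} (hx : a < x) (hy : a < y) (h : f x = f y) :
    x = y ∨ x < c ∧ c < y ∨ y < c ∧ c < x := by
  have inj_left : ∀ z, a < z → z ≤ c → f z = f c → z = c := fun z hz hzc hfz =>
    hanti.injOn ⟨hz, hzc⟩ ⟨hc, le_rfl⟩ hfz
  rcases le_total x c with hxc | hcx <;> rcases le_total y c with hyc | hcy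
  · exact .inl (hanti.injOn ⟨hx, hxc⟩ ⟨hy, hyc⟩ h)
  · rcases hcy.eq_or_lt with rfl | hcy
    · exact .inl (inj_left x hx hxc h)
    rcases hxc.eq_or_lt with rfl | hxc
    · exact .inl (hmono.injOn self_mem_Ici hcy.le h)
    · exact .inr (.inl ⟨hxc, hcy⟩)
  · rcases hcx.eq_or_lt with rfl | hcx
    · exact .inl (inj_left y hy hyc h.symm).symm
    rcases hyc.eq_or_lt with rfl | hyc
    · exact .inl (hmono.injOn hcx.le self_mem_Ici h)
    · exact .inr (.inr ⟨hyc, hcx⟩)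
  · exact .inl (hmono.injOn hcx hcy h)

theorem eq_of_isMinOn_Ioi {d : ℝ} (hd : a < d) (hmin : IsMinOn f (Ioi a) d) : d = c := by
  have hfd : f d = f c :=
    le_antisymm (hmin hc) (isMinOn_Ioi_of_strictAntiOn_of_strictMonoOn hc hanti hmono hd)
  rcases eq_or_lt_lt_of_apply_eq hc hanti hmono hd hc hfd with h | h | h
  · exact h
  · exact (lt_irrefl c h.2).elim
  · exact (lt_irrefl c h.1).elim

theorem exists_ne_apply_eq (hf : ContinuousOn f (Ioi a)) (h₀ : Tendsto f (𝓝[>] a) atTop)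
    (htop : Tendsto f atTop atTop) {x : ℝ} (hx : a < x) (hxc : x ≠ c) :
    ∃ y, a < y ∧ y ≠ x ∧ f y = f x ∧ (∀ z, a < z → z ≠ x → f z = f x → z = y) ∧
      (x < c → c < y) ∧ (c < x → y < c) := by
  have hfx : f x ∈ Ici (f c) := isMinOn_Ioi_of_strictAntiOn_of_strictMonoOn hc hanti hmono hx
  obtain ⟨y, hy, hyx, hxy⟩ : ∃ y, a < y ∧ f y = f x ∧ x ≠ y := by
    rcases hxc.lt_or_gt with hxc | hcx
    · obtain ⟨y, hcy, hyx⟩ :=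
        intermediate_value_Ici (hf.mono fun z hz => hc.trans_le hz) htop hfx
      exact ⟨y, hc.trans_le hcy, hyx, (hxc.trans_le hcy).ne⟩
    · obtain ⟨y, hy, hyx⟩ := isPreconnected_Ioc.intermediate_value_Ici (right_mem_Ioc.2 hc)
        (le_principal_iff.2 (Ioc_mem_nhdsGT hc)) (hf.mono Ioc_subset_Ioi_self) h₀ hfx
      exact ⟨y, hy.1, hyx, (hy.2.trans_lt hcx).ne'⟩
  have hside := (eq_or_lt_lt_of_apply_eq hc hanti hmono hx hy hyx.symm).resolve_left hxy
  refine ⟨y, hy, hxy.symm, hyx, fun z hz hzx hfz => ?_, fun h => ?_, fun h => ?_⟩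
  · have hzside := (eq_or_lt_lt_of_apply_eq hc hanti hmono hz hx hfz).resolve_left hzx
    have hzy := eq_or_lt_lt_of_apply_eq hc hanti hmono hz hy (hfz.trans hyx.symm)
    grind
  all_goals grind

end Valley

noncomputable def derivQhat (γ ε₁ α d : ℝ) : ℝ :=
  2 * (α + (γ / 2) ^ 2 * d - (((2 - γ) / 2) ^ 2 + ε₁) / d ^ 3)

theorem hasDerivAt_Qhat (γ ε₁ α : ℝ) {d : ℝ} (hd : d ≠ 0) :
    HasDerivAt (Qhat γ ε₁ α) (derivQhat γ ε₁ α d) d := by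
  have hsq := hasDerivAt_pow 2 d
  have h := ((((hasDerivAt_const d (1 : ℝ)).div hsq (pow_ne_zero 2 hd)).mul
    ((((hsq.const_mul γ).div_const 2).const_add ((2 - γ) / 2)).fun_pow 2)).add
    ((hasDerivAt_const d ε₁).div hsq (pow_ne_zero 2 hd))).add
    (((hasDerivAt_id d).sub_const 1).const_mul (2 * α))
  refine h.congr_deriv ?_
  simp only [derivQhat, Pi.div_apply]
  field_simp
  ring

theorem le_Qhat (γ ε₁ α d : ℝ) : ε₁ / d ^ 2 + 2 * α * (d - 1) ≤ Qhat γ ε₁ α d := by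
  have : 0 ≤ 1 / d ^ 2 * ((2 - γ) / 2 + γ * d ^ 2 / 2) ^ 2 := by positivity
  simp only [Qhat]
  linarith

theorem tendsto_Qhat_nhdsGT_zero (γ α : ℝ) {ε₁ : ℝ} (hε₁ : 0 < ε₁) :
    Tendsto (Qhat γ ε₁ α) (𝓝[>] 0) atTop := by
  have hpole : Tendsto (fun d : ℝ => ε₁ / d ^ 2) (𝓝[>] 0) atTop := by
    simpa only [Function.comp_def, div_eq_mul_inv, inv_pow] using
      ((tendsto_pow_atTop two_ne_zero).comp tendsto_inv_nhdsGT_zero).const_mul_atTop hε₁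
  have hlin : Tendsto (fun d : ℝ => 2 * α * (d - 1)) (𝓝[>] 0) (𝓝 (2 * α * (0 - 1))) :=
    (Continuous.tendsto (by fun_prop) 0).mono_left nhdsWithin_le_nhds
  exact tendsto_atTop_mono (le_Qhat γ ε₁ α) (hpole.atTop_add hlin)

theorem tendsto_Qhat_atTop (γ ε₁ : ℝ) {α : ℝ} (hα : 0 < α) :
    Tendsto (Qhat γ ε₁ α) atTop atTop := by
  have hdecay : Tendsto (fun d : ℝ => ε₁ / d ^ 2) atTop (𝓝 0) :=
    tendsto_const_nhds.div_atTop (tendsto_pow_atTop two_ne_zero)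
  have hlin : Tendsto (fun d : ℝ => 2 * α * (d - 1)) atTop atTop :=
    (tendsto_atTop_add_const_right atTop (-1) tendsto_id).const_mul_atTop (by positivity)
  exact tendsto_atTop_mono (le_Qhat γ ε₁ α) (by simpa using hdecay.add_atTop hlin)

theorem strictMonoOn_derivQhat (γ α : ℝ) {ε₁ : ℝ} (hε₁ : 0 < ε₁) :
    StrictMonoOn (derivQhat γ ε₁ α) (Ioi 0) := by
  intro x (hx : 0 < x) y _ hxy
  have hpole : (((2 - γ) / 2) ^ 2 + ε₁) / y ^ 3 < (((2 - γ) / 2) ^ 2 + ε₁) / x ^ 3 :=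
    div_lt_div_of_pos_left (by positivity) (by positivity)
      (pow_lt_pow_left₀ hxy hx.le three_ne_zero)
  have hlin : (γ / 2) ^ 2 * x ≤ (γ / 2) ^ 2 * y := by gcongr
  simp only [derivQhat]
  linarith

theorem derivQhat_one (γ ε₁ α : ℝ) : derivQhat γ ε₁ α 1 = 2 * (α - (1 - γ + ε₁)) := by
  simp only [derivQhat]
  ring

/-- For real `γ`, `ε₁ > 0` and `α > 0`, the Bernoulli function attains its global minimum
over `(0, ∞)` at a unique point `d_cr > 0`; moreover, if `α ≠ α_cr = 1 − γ + ε₁`, there is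
a unique `d_* > 0` with `d_* ≠ 1` and `Q̂(d_*) = Q̂(1)`, and `d_* ∈ (d_cr, ∞)` if
`α < α_cr`, while `d_* ∈ (0, d_cr)` if `α > α_cr`. -/
theorem stmt_2 (γ ε₁ α : ℝ) (hε₁ : 0 < ε₁) (hα : 0 < α) :
    ∃ dcr : ℝ, 0 < dcr ∧ IsMinOn (Qhat γ ε₁ α) (Set.Ioi 0) dcr ∧
      (∀ d : ℝ, 0 < d → IsMinOn (Qhat γ ε₁ α) (Set.Ioi 0) d → d = dcr) ∧
      (α ≠ 1 - γ + ε₁ →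
        ∃ dstar : ℝ, 0 < dstar ∧ dstar ≠ 1 ∧ Qhat γ ε₁ α dstar = Qhat γ ε₁ α 1 ∧
          (∀ d : ℝ, 0 < d → d ≠ 1 → Qhat γ ε₁ α d = Qhat γ ε₁ α 1 → d = dstar) ∧
          (α < 1 - γ + ε₁ → dstar ∈ Set.Ioi dcr) ∧
          (1 - γ + ε₁ < α → dstar ∈ Set.Ioo 0 dcr)) := by
  have hderiv : ∀ d ∈ Ioi (0 : ℝ), HasDerivAt (Qhat γ ε₁ α) (derivQhat γ ε₁ α d) d :=
    fun d hd => hasDerivAt_Qhat γ ε₁ α (ne_of_gt hd)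
  have hderiv_mono := strictMonoOn_derivQhat γ α hε₁
  obtain ⟨c, hc, hc', hanti, hmono⟩ := exists_strictAntiOn_strictMonoOn_of_hasDerivAt hderiv
    hderiv_mono (tendsto_Qhat_nhdsGT_zero γ α hε₁) (tendsto_Qhat_atTop γ ε₁ hα)
  refine ⟨c, hc, isMinOn_Ioi_of_strictAntiOn_of_strictMonoOn hc hanti hmono,
    fun d hd hmin => eq_of_isMinOn_Ioi hc hanti hmono hd hmin, fun hne => ?_⟩
  have one_lt_c_iff : 1 < c ↔ α < 1 - γ + ε₁ := by
    rw [← hderiv_mono.lt_iff_lt (mem_Ioi.2 one_pos) hc, hc', derivQhat_one]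
    constructor <;> intro <;> linarith
  have c_lt_one_iff : c < 1 ↔ 1 - γ + ε₁ < α := by
    rw [← hderiv_mono.lt_iff_lt hc (mem_Ioi.2 one_pos), hc', derivQhat_one]
    constructor <;> intro <;> linarith
  have one_ne : (1 : ℝ) ≠ c := by
    rintro rfl
    rw [derivQhat_one] at hc'
    exact hne (by linarith)
  obtain ⟨y, hy, hy1, hyv, huniq, hright, hleft⟩ := exists_ne_apply_eq hc hanti hmono
    (fun x hx => (hderiv x hx).continuousAt.continuousWithinAt) (tendsto_Qhat_nhdsGT_zero γ α hε₁)
    (tendsto_Qhat_atTop γ ε₁ hα) one_pos one_ne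
  exact ⟨y, hy, hy1, hyv, huniq, fun h => hright (one_lt_c_iff.2 h),
    fun h => ⟨hy, hleft (c_lt_one_iff.2 h)⟩⟩
end

section
/- Let γ be real, ε₁ > 0 and α real, and suppose d_* > 0 with d_* ≠ 1 satisfies Q̂(d_*) = Q̂(1). If α < α_cr then Ŝ(d_*) > Ŝ(1), whereas if α > α_cr then Ŝ(d_*) < Ŝ(1). -/
/-- The flow force function
`Ŝ(d) = (2−γ)²/(8d) − γ²d³/24 − (2−γ)γd/4 − (α/2)d² + ((2α+1+ε₁)/2)d + ε₁/(2d)`. -/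
noncomputable def Shat (γ ε₁ α d : ℝ) : ℝ :=
  (2 - γ) ^ 2 / (8 * d) - γ ^ 2 * d ^ 3 / 24 - (2 - γ) * γ * d / 4 - (α / 2) * d ^ 2
    + ((2 * α + 1 + ε₁) / 2) * d + ε₁ / (2 * d)

/-!
Writing `K = (2-γ)²/4 + ε₁ > 0` and `g = γ²/4 ≥ 0`, one has `Q̂(d) = K/d² + g d² + 2αd + const`
and `α_cr = K - g`. Cancelling the trivial root `d = 1` of `Q̂(d) = Q̂(1)` leaves the relation
`2αd² = (K - g d²)(d + 1)`, under which both `α_cr - α` and `Ŝ(d) - Ŝ(1)` factor as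
`(d - 1)` resp. `(d - 1)³` times a positive quantity. So both have the sign of `d - 1`.
-/

section

variable (γ ε₁ α : ℝ) {d : ℝ}

theorem Qhat_sub_Qhat_one_mul_sq (hd : d ≠ 0) :
    d ^ 2 * (Qhat γ ε₁ α d - Qhat γ ε₁ α 1)
      = (d - 1) * (2 * α * d ^ 2 - ((2 - γ) ^ 2 / 4 + ε₁ - γ ^ 2 / 4 * d ^ 2) * (d + 1)) := by
  unfold Qhat
  field_simp
  ring

theorem two_mul_mul_sq_of_Qhat_eq (hd : d ≠ 0) (hne : d ≠ 1)
    (hQ : Qhat γ ε₁ α d = Qhat γ ε₁ α 1) :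
    2 * α * d ^ 2 = ((2 - γ) ^ 2 / 4 + ε₁ - γ ^ 2 / 4 * d ^ 2) * (d + 1) := by
  have h := Qhat_sub_Qhat_one_mul_sq γ ε₁ α hd
  rw [hQ, sub_self, mul_zero, eq_comm] at h
  exact sub_eq_zero.mp ((mul_eq_zero.mp h).resolve_left (sub_ne_zero.mpr hne))

theorem alphaCr_sub_mul_sq_of_Qhat_eq (hd : d ≠ 0) (hne : d ≠ 1)
    (hQ : Qhat γ ε₁ α d = Qhat γ ε₁ α 1) :
    2 * d ^ 2 * (1 - γ + ε₁ - α)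
      = (d - 1) * (((2 - γ) ^ 2 / 4 + ε₁) * (2 * d + 1) + γ ^ 2 / 4 * d ^ 2) := by
  linear_combination -two_mul_mul_sq_of_Qhat_eq γ ε₁ α hd hne hQ

theorem Shat_sub_Shat_one_mul_sq_of_Qhat_eq (hd : d ≠ 0) (hne : d ≠ 1)
    (hQ : Qhat γ ε₁ α d = Qhat γ ε₁ α 1) :
    12 * d ^ 2 * (Shat γ ε₁ α d - Shat γ ε₁ α 1)
      = (d - 1) ^ 3 * (3 * ((2 - γ) ^ 2 / 4 + ε₁) + γ ^ 2 / 4 * d ^ 2) := by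
  have hS : 12 * d ^ 2 * (Shat γ ε₁ α d - Shat γ ε₁ α 1)
      = (d - 1) ^ 3 * (3 * ((2 - γ) ^ 2 / 4 + ε₁) + γ ^ 2 / 4 * d ^ 2)
        - 3 * (d - 1) ^ 2 * (2 * α * d ^ 2 - ((2 - γ) ^ 2 / 4 + ε₁ - γ ^ 2 / 4 * d ^ 2) * (d + 1)) := by
    unfold Shat
    field_simp
    ring
  rw [hS, two_mul_mul_sq_of_Qhat_eq γ ε₁ α hd hne hQ, sub_self, mul_zero, sub_zero]

theorem sign_Shat_sub_Shat_one_of_Qhat_eq (hε₁ : 0 < ε₁) (hd : 0 < d) (hne : d ≠ 1)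
    (hQ : Qhat γ ε₁ α d = Qhat γ ε₁ α 1) :
    SignType.sign (Shat γ ε₁ α d - Shat γ ε₁ α 1) = SignType.sign (1 - γ + ε₁ - α) := by
  have hgap := congrArg SignType.sign (alphaCr_sub_mul_sq_of_Qhat_eq γ ε₁ α hd.ne' hne hQ)
  have hS := congrArg SignType.sign (Shat_sub_Shat_one_mul_sq_of_Qhat_eq γ ε₁ α hd.ne' hne hQ)
  simp only [sign_mul, sign_pow, sign_pos (show (0 : ℝ) < 2 * d ^ 2 by positivity),
    sign_pos (show (0 : ℝ) < 12 * d ^ 2 by positivity),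
    sign_pos (show (0 : ℝ) < ((2 - γ) ^ 2 / 4 + ε₁) * (2 * d + 1) + γ ^ 2 / 4 * d ^ 2 by positivity),
    sign_pos (show (0 : ℝ) < 3 * ((2 - γ) ^ 2 / 4 + ε₁) + γ ^ 2 / 4 * d ^ 2 by positivity),
    SignType.pow_odd _ (show Odd 3 by decide), one_mul, mul_one] at hgap hS
  rw [hS, hgap]

end

/-- Let `γ` be real, `ε₁ > 0`, `α` real, and suppose `d_* > 0`, `d_* ≠ 1` satisfies
`Q̂(d_*) = Q̂(1)`.  If `α < α_cr = 1 − γ + ε₁` then `Ŝ(d_*) > Ŝ(1)`, whereas if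
`α > α_cr` then `Ŝ(d_*) < Ŝ(1)`. -/
theorem stmt_4 (γ ε₁ α : ℝ) (hε₁ : 0 < ε₁) (dstar : ℝ) (hd : 0 < dstar) (hne : dstar ≠ 1)
    (hQ : Qhat γ ε₁ α dstar = Qhat γ ε₁ α 1) :
    (α < 1 - γ + ε₁ → Shat γ ε₁ α dstar > Shat γ ε₁ α 1) ∧
    (1 - γ + ε₁ < α → Shat γ ε₁ α dstar < Shat γ ε₁ α 1) := by
  have hsign := sign_Shat_sub_Shat_one_of_Qhat_eq γ ε₁ α hε₁ hd hne hQ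
  constructor
  · intro hα
    rwa [sign_pos (sub_pos.mpr hα), sign_eq_one_iff, sub_pos] at hsign
  · intro hα
    rwa [sign_neg (sub_neg.mpr hα), sign_eq_neg_one_iff, sub_neg] at hsign
end

section
/- (Nonexistence of nontrivial conjugate flows.) Let γ be real, ε₁ > 0 and α real. If d > 0 satisfies the conjugate flow equations Q̂(d) = Q̂(1) and Ŝ(d) = Ŝ(1), then d = 1. -/
/-!
The parameter `α` enters `Q̂(d) - Q̂(1)` as `2α(d - 1)` and `Ŝ(d) - Ŝ(1)` as `-(α/2)(d - 1)²`,
so the combination `(d - 1)(Q̂(d) - Q̂(1)) + 4(Ŝ(d) - Ŝ(1))` is free of `α`. Cleared of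
denominators it equals `(d - 1)³` times `(3/2)(γ - 2)² + 6ε₁ + γ²d²/2`, which is positive when
`ε₁ > 0`. On a conjugate flow the combination vanishes, hence `d = 1`.
-/

theorem Qhat_Shat_combination (γ ε₁ α : ℝ) {d : ℝ} (hd : d ≠ 0) :
    6 * d ^ 2 * ((d - 1) * (Qhat γ ε₁ α d - Qhat γ ε₁ α 1)
        + 4 * (Shat γ ε₁ α d - Shat γ ε₁ α 1)) =
      (d - 1) ^ 3 * (3 / 2 * (γ - 2) ^ 2 + 6 * ε₁ + γ ^ 2 * d ^ 2 / 2) := by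
  unfold Qhat Shat
  field_simp
  ring

/-- Nonexistence of nontrivial conjugate flows: if `d > 0` satisfies the conjugate flow
equations `Q̂(d) = Q̂(1)` and `Ŝ(d) = Ŝ(1)`, then `d = 1`. -/
theorem stmt_5 (γ ε₁ α : ℝ) (hε₁ : 0 < ε₁) (d : ℝ) (hd : 0 < d)
    (hQ : Qhat γ ε₁ α d = Qhat γ ε₁ α 1) (hS : Shat γ ε₁ α d = Shat γ ε₁ α 1) :
    d = 1 := by
  have hcomb := Qhat_Shat_combination γ ε₁ α hd.ne'
  rw [hQ, hS, sub_self, sub_self, mul_zero, mul_zero, add_zero, mul_zero] at hcomb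
  have hpos : 0 < 3 / 2 * (γ - 2) ^ 2 + 6 * ε₁ + γ ^ 2 * d ^ 2 / 2 := by positivity
  have hcube : (d - 1) ^ 3 = 0 :=
    (mul_eq_zero.mp hcomb.symm).resolve_right hpos.ne'
  exact sub_eq_zero.mp (pow_eq_zero_iff three_ne_zero |>.mp hcube)
end

section
/- (Kernel elements at the critical parameter.) Let γ be real, ε₁ > 0, and set α_cr := 1 − γ + ε₁. For any real A, B, the triple of functions w₁(x,y) = (A + Bx)·y, w₂(x,y) = −γ·(A + Bx)·y, w₃(x,y) = 0 consists of harmonic functions on ℝ², vanishes on the line y = 0, and satisfies on the line y = 1 the three linearized boundary conditions: γ·w₁ + w₂ = 0; ∂_y w₂ + (γ − 1 − ε₁)·∂_y w₁ + (γ + α_cr)·w₁ + ε₁·∂_y w₃ = 0; and w₃ = 0. -/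
noncomputable def pdx (f : ℝ × ℝ → ℝ) (p : ℝ × ℝ) : ℝ := fderiv ℝ f p (1, 0)

noncomputable def pdy (f : ℝ × ℝ → ℝ) (p : ℝ × ℝ) : ℝ := fderiv ℝ f p (0, 1)

section PartialDerivatives

variable {f : ℝ × ℝ → ℝ} {f' : ℝ × ℝ →L[ℝ] ℝ} {p : ℝ × ℝ}

theorem HasFDerivAt.pdx_eq (h : HasFDerivAt f f' p) : pdx f p = f' (1, 0) := by
  rw [pdx, h.fderiv]

theorem HasFDerivAt.pdy_eq (h : HasFDerivAt f f' p) : pdy f p = f' (0, 1) := by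
  rw [pdy, h.fderiv]

theorem pdx_const (c : ℝ) : pdx (fun _ => c) = fun _ => 0 := by
  funext p
  simp [pdx]

theorem pdy_const (c : ℝ) : pdy (fun _ => c) = fun _ => 0 := by
  funext p
  simp [pdy]

end PartialDerivatives

section AffineTimesHeight

variable (A B : ℝ)

theorem hasFDerivAt_affine_fst (p : ℝ × ℝ) :
    HasFDerivAt (fun q : ℝ × ℝ => A + B * q.1) (B • ContinuousLinearMap.fst ℝ ℝ ℝ) p :=
  (hasFDerivAt_fst.const_mul B).const_add A

theorem hasFDerivAt_affine_fst_mul_snd (p : ℝ × ℝ) :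
    HasFDerivAt (fun q : ℝ × ℝ => (A + B * q.1) * q.2)
      ((A + B * p.1) • ContinuousLinearMap.snd ℝ ℝ ℝ +
        p.2 • (B • ContinuousLinearMap.fst ℝ ℝ ℝ)) p :=
  (hasFDerivAt_affine_fst A B p).mul hasFDerivAt_snd

theorem contDiff_affine_fst_mul_snd {n : WithTop ℕ∞} :
    ContDiff ℝ n (fun q : ℝ × ℝ => (A + B * q.1) * q.2) :=
  (contDiff_const.add (contDiff_const.mul contDiff_fst)).mul contDiff_snd

theorem pdx_affine_fst_mul_snd :
    pdx (fun q : ℝ × ℝ => (A + B * q.1) * q.2) = fun q => B * q.2 := by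
  funext p
  rw [(hasFDerivAt_affine_fst_mul_snd A B p).pdx_eq]
  simp [mul_comm]

theorem pdy_affine_fst_mul_snd :
    pdy (fun q : ℝ × ℝ => (A + B * q.1) * q.2) = fun q => A + B * q.1 := by
  funext p
  rw [(hasFDerivAt_affine_fst_mul_snd A B p).pdy_eq]
  simp

theorem pdx_const_mul_snd : pdx (fun q : ℝ × ℝ => B * q.2) = 0 := by
  funext p
  rw [(hasFDerivAt_snd.const_mul B).pdx_eq]
  simp

theorem pdy_affine_fst : pdy (fun q : ℝ × ℝ => A + B * q.1) = 0 := by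
  funext p
  rw [(hasFDerivAt_affine_fst A B p).pdy_eq]
  simp

theorem laplacian_affine_fst_mul_snd (p : ℝ × ℝ) :
    pdx (pdx (fun q : ℝ × ℝ => (A + B * q.1) * q.2)) p +
      pdy (pdy (fun q : ℝ × ℝ => (A + B * q.1) * q.2)) p = 0 := by
  simp only [pdx_affine_fst_mul_snd, pdy_affine_fst_mul_snd, pdx_const_mul_snd,
    pdy_affine_fst, Pi.zero_apply, add_zero]

end AffineTimesHeight

theorem stmt_9_general (γ ε₁ : ℝ) (A B : ℝ) :
    let αcr : ℝ := 1 - γ + ε₁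
    let w₁ : ℝ × ℝ → ℝ := fun p => (A + B * p.1) * p.2
    let w₂ : ℝ × ℝ → ℝ := fun p => -γ * ((A + B * p.1) * p.2)
    let w₃ : ℝ × ℝ → ℝ := fun _ => 0
    (ContDiff ℝ 2 w₁ ∧ ContDiff ℝ 2 w₂ ∧ ContDiff ℝ 2 w₃) ∧
    (∀ p : ℝ × ℝ, pdx (pdx w₁) p + pdy (pdy w₁) p = 0 ∧
                  pdx (pdx w₂) p + pdy (pdy w₂) p = 0 ∧
                  pdx (pdx w₃) p + pdy (pdy w₃) p = 0) ∧
    (∀ x : ℝ, w₁ (x, 0) = 0 ∧ w₂ (x, 0) = 0 ∧ w₃ (x, 0) = 0) ∧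
    (∀ x : ℝ, γ * w₁ (x, 1) + w₂ (x, 1) = 0) ∧
    (∀ x : ℝ, pdy w₂ (x, 1) + (γ - 1 - ε₁) * pdy w₁ (x, 1)
        + (γ + αcr) * w₁ (x, 1) + ε₁ * pdy w₃ (x, 1) = 0) ∧
    (∀ x : ℝ, w₃ (x, 1) = 0) := by
  intro αcr w₁ w₂ w₃
  have hw₂ : w₂ = fun q => (-γ * A + -γ * B * q.1) * q.2 := by
    funext q
    ring
  refine ⟨⟨?_, ?_, contDiff_const⟩, fun p => ⟨?_, ?_, ?_⟩,
    fun x => ⟨by simp [w₁], by simp [w₂], rfl⟩, fun x => ?_, fun x => ?_, fun x => rfl⟩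
  · exact contDiff_affine_fst_mul_snd A B
  · exact hw₂ ▸ contDiff_affine_fst_mul_snd _ _
  · exact laplacian_affine_fst_mul_snd A B p
  · exact hw₂ ▸ laplacian_affine_fst_mul_snd _ _ p
  · simp only [w₃, pdx_const, pdy_const, add_zero]
  · simp only [w₁, w₂]
    ring
  -- At y = 1 we have w₁ = ∂_y w₁, and the criticality γ + α_cr = 1 + ε₁ makes the coefficients cancel.
  · rw [hw₂, pdy_affine_fst_mul_snd, pdy_affine_fst_mul_snd, pdy_const]
    simp only [w₁, αcr]
    ring

/-- Kernel elements at the critical parameter `α_cr = 1 − γ + ε₁`: for any real `A, B`,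
the triple `w₁ = (A + Bx)y`, `w₂ = −γ(A + Bx)y`, `w₃ = 0` consists of harmonic functions
on `ℝ²`, vanishes on `{y = 0}`, and satisfies on `{y = 1}` the three linearized boundary
conditions `γw₁ + w₂ = 0`, `∂_y w₂ + (γ − 1 − ε₁)∂_y w₁ + (γ + α_cr)w₁ + ε₁∂_y w₃ = 0`
and `w₃ = 0`. -/
theorem stmt_9 (γ ε₁ : ℝ) (hε₁ : 0 < ε₁) (A B : ℝ) :
    let αcr : ℝ := 1 - γ + ε₁
    let w₁ : ℝ × ℝ → ℝ := fun p => (A + B * p.1) * p.2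
    let w₂ : ℝ × ℝ → ℝ := fun p => -γ * ((A + B * p.1) * p.2)
    let w₃ : ℝ × ℝ → ℝ := fun _ => 0
    (ContDiff ℝ 2 w₁ ∧ ContDiff ℝ 2 w₂ ∧ ContDiff ℝ 2 w₃) ∧
    (∀ p : ℝ × ℝ, pdx (pdx w₁) p + pdy (pdy w₁) p = 0 ∧
                  pdx (pdx w₂) p + pdy (pdy w₂) p = 0 ∧
                  pdx (pdx w₃) p + pdy (pdy w₃) p = 0) ∧
    (∀ x : ℝ, w₁ (x, 0) = 0 ∧ w₂ (x, 0) = 0 ∧ w₃ (x, 0) = 0) ∧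
    (∀ x : ℝ, γ * w₁ (x, 1) + w₂ (x, 1) = 0) ∧
    (∀ x : ℝ, pdy w₂ (x, 1) + (γ - 1 - ε₁) * pdy w₁ (x, 1)
        + (γ + αcr) * w₁ (x, 1) + ε₁ * pdy w₃ (x, 1) = 0) ∧
    (∀ x : ℝ, w₃ (x, 1) = 0) :=
  stmt_9_general γ ε₁ A B
end
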